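/- Let α > 0, H ∈ (1/2, 1). Then for all T > 0, ∫_0^T ∫_0^T e^{αu} e^{αv} r_H(u, v) du dv ≤ C e^{2αT}, where C depends only on α and H and r_H is as defined. -/

import Mathlib

/-!
The kernel is stationary: `r_H(u, v) = c_H |2 sinh ((u - v) / (2H))| ^ (2H - 2)`.
Since `2H - 2 ∈ (-1, 0)`, this is `ρ (u - v)` for a function `ρ` integrable on all of `ℝ`
(like `|s| ^ (2H - 2)` near `0`, exponentially decaying at infinity). Bounding
`e^{αv} ≤ e^{αT}` makes the inner integral at most `e^{αT} ‖ρ‖₁`, and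
`∫_{-∞}^T e^{αu} du = e^{αT} / α`.
-/

open MeasureTheory Real

/-- The kernel r_H. -/
noncomputable def rker (H w z : ℝ) : ℝ :=
  H ^ (2 * H - 1) * (2 * H - 1) * (Real.exp (w / H) * Real.exp (z / H)) ^ (1 - H) *
    |Real.exp (w / H) - Real.exp (z / H)| ^ (2 * H - 2)

open Set

theorem integrable_comp_abs_of_integrableOn_Ioi {E : Type*} [NormedAddCommGroup E] {f : ℝ → E}
    (hf : IntegrableOn f (Ioi 0)) : Integrable fun x => f |x| := by
  have hIoi : IntegrableOn (fun x => f |x|) (Ioi 0) :=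
    hf.congr_fun (fun x hx => by rw [abs_of_pos hx]) measurableSet_Ioi
  have hIic : IntegrableOn (fun x => f |x|) (Iic 0) := by
    have hneg : MeasurableEmbedding fun x : ℝ => -x := (Homeomorph.neg ℝ).measurableEmbedding
    rw [← Measure.map_neg_eq_self (volume : Measure ℝ), hneg.integrableOn_map_iff]
    simp only [Function.comp_def, abs_neg, neg_preimage, neg_Iic, neg_zero]
    exact (integrableOn_Ici_iff_integrableOn_Ioi).mpr hIoi
  simpa only [← integrableOn_univ, ← Iic_union_Ioi (a := (0 : ℝ))] using hIic.union hIoi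

theorem mul_exp_half_div_two_le_sinh {x : ℝ} (hx : 0 ≤ x) : x * exp (x / 2) / 2 ≤ sinh x := by
  have hsinh : x / 2 ≤ sinh (x / 2) := self_le_sinh_iff.2 (by linarith)
  have hcosh : exp (x / 2) / 2 ≤ cosh (x / 2) := by
    rw [cosh_eq]; linarith [exp_pos (-(x / 2))]
  calc x * exp (x / 2) / 2 = 2 * (x / 2) * (exp (x / 2) / 2) := by ring
    _ ≤ 2 * sinh (x / 2) * cosh (x / 2) := by gcongr
    _ = sinh x := by rw [← sinh_two_mul]; ring_nf

theorem integrableOn_sinh_rpow {p : ℝ} (hp₁ : -1 < p) (hp₀ : p < 0) :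
    IntegrableOn (fun x => sinh x ^ p) (Ioi 0) := by
  have hg := (integrableOn_rpow_mul_exp_neg_mul_rpow hp₁ one_pos
    (by linarith : 0 < -p / 2)).const_mul (2 ^ (-p))
  refine hg.mono' ((continuous_sinh.measurable.pow_const p).aestronglyMeasurable) ?_
  filter_upwards [ae_restrict_mem measurableSet_Ioi] with x (hx : 0 < x)
  have hlow : 0 < x * exp (x / 2) / 2 := by positivity
  rw [norm_of_nonneg (rpow_nonneg (sinh_pos_iff.2 hx).le p)]
  calc sinh x ^ p ≤ (x * exp (x / 2) / 2) ^ p :=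
        rpow_le_rpow_of_nonpos hlow (mul_exp_half_div_two_le_sinh hx.le) hp₀.le
    _ = 2 ^ (-p) * (x ^ p * exp (-(-p / 2) * x ^ (1 : ℝ))) := by
        rw [div_rpow (by positivity) zero_le_two, mul_rpow hx.le (exp_pos _).le, ← exp_mul,
          rpow_one, rpow_neg zero_le_two]
        ring_nf

theorem integrable_abs_sinh_rpow {p : ℝ} (hp₁ : -1 < p) (hp₀ : p < 0) :
    Integrable fun x => |sinh x| ^ p := by
  simpa only [abs_sinh] using
    integrable_comp_abs_of_integrableOn_Ioi (integrableOn_sinh_rpow hp₁ hp₀)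

theorem rker_eq_abs_sinh_rpow {H : ℝ} (hH : H ≠ 0) (w z : ℝ) :
    rker H w z = H ^ (2 * H - 1) * (2 * H - 1) * 2 ^ (2 * H - 2) *
      |sinh ((w - z) / (2 * H))| ^ (2 * H - 2) := by
  set m := (w + z) / (2 * H)
  set d := (w - z) / (2 * H)
  have hw : w / H = m + d := by simp only [m, d]; field_simp; ring
  have hz : z / H = m - d := by simp only [m, d]; field_simp; ring
  have hprod : exp (w / H) * exp (z / H) = exp (2 * m) := by
    rw [← exp_add, hw, hz]; ring_nf
  have hdiff : exp (w / H) - exp (z / H) = exp m * (2 * sinh d) := by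
    rw [hw, hz, sinh_eq, exp_add, sub_eq_add_neg m, exp_add]; ring
  have hcancel : exp (2 * m * (1 - H)) * exp (m * (2 * H - 2)) = 1 := by
    rw [← exp_add, exp_eq_one_iff]; ring
  unfold rker
  rw [hprod, hdiff, abs_mul, abs_mul, abs_of_pos (exp_pos m), abs_two,
    mul_rpow (exp_pos _).le (by positivity), mul_rpow zero_le_two (abs_nonneg _),
    ← exp_mul, ← exp_mul]
  linear_combination (H ^ (2 * H - 1) * (2 * H - 1) * 2 ^ (2 * H - 2) *
      |sinh d| ^ (2 * H - 2)) * hcancel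

theorem exists_integrable_rker_eq_comp_sub {H : ℝ} (hH : H ∈ Ioo (1 / 2 : ℝ) 1) :
    ∃ ρ : ℝ → ℝ, Integrable ρ ∧ 0 ≤ ρ ∧ ∀ u v, rker H u v = ρ (u - v) := by
  obtain ⟨hH₁, hH₂⟩ := hH
  refine ⟨fun s => H ^ (2 * H - 1) * (2 * H - 1) * 2 ^ (2 * H - 2) *
    |sinh (s / (2 * H))| ^ (2 * H - 2), ?_, fun s => ?_,
    rker_eq_abs_sinh_rpow (by linarith)⟩
  · exact ((integrable_abs_sinh_rpow (by linarith) (by linarith)).comp_div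
      (by linarith)).const_mul _
  · have : 0 < 2 * H - 1 := by linarith
    dsimp only [Pi.zero_apply]
    positivity

section ExpWeighted

variable {ρ : ℝ → ℝ} {α T : ℝ}

theorem integral_exp_mul_comp_sub_le (hρ : Integrable ρ) (hρ₀ : 0 ≤ ρ) (hα : 0 ≤ α)
    (hT : 0 ≤ T) (u : ℝ) :
    ∫ v in (0 : ℝ)..T, exp (α * v) * ρ (u - v) ≤ exp (α * T) * ∫ s, ρ s := by
  have hshift : IntervalIntegrable (fun v => ρ (u - v)) volume 0 T :=
    (hρ.comp_sub_left u).intervalIntegrable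
  calc ∫ v in (0 : ℝ)..T, exp (α * v) * ρ (u - v)
      ≤ ∫ v in (0 : ℝ)..T, exp (α * T) * ρ (u - v) := by
        refine intervalIntegral.integral_mono_on hT
          (hshift.continuousOn_mul (by fun_prop)) (hshift.const_mul _) fun v hv => ?_
        exact mul_le_mul_of_nonneg_right (exp_le_exp.2 (by nlinarith [hv.2])) (hρ₀ _)
    _ = exp (α * T) * ∫ s in (u - T)..u, ρ s := by
        rw [intervalIntegral.integral_const_mul, intervalIntegral.integral_comp_sub_left, sub_zero]
    _ ≤ exp (α * T) * ∫ s, ρ s := by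
        rw [intervalIntegral.integral_of_le (by linarith)]
        exact mul_le_mul_of_nonneg_left
          (setIntegral_le_integral hρ (Filter.Eventually.of_forall hρ₀)) (exp_pos _).le

theorem integral_integral_exp_mul_exp_mul_comp_sub_le (hρ : Integrable ρ) (hρ₀ : 0 ≤ ρ)
    (hα : 0 < α) (hT : 0 ≤ T) :
    ∫ u in (0 : ℝ)..T, ∫ v in (0 : ℝ)..T, exp (α * u) * exp (α * v) * ρ (u - v)
      ≤ (∫ s, ρ s) / α * exp (2 * α * T) := by
  set M := ∫ s, ρ s
  have hM : 0 ≤ M := integral_nonneg hρ₀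
  have hinner (u : ℝ) : ∫ v in (0 : ℝ)..T, exp (α * u) * exp (α * v) * ρ (u - v)
      = exp (α * u) * ∫ v in (0 : ℝ)..T, exp (α * v) * ρ (u - v) := by
    simp only [mul_assoc, intervalIntegral.integral_const_mul]
  calc ∫ u in (0 : ℝ)..T, ∫ v in (0 : ℝ)..T, exp (α * u) * exp (α * v) * ρ (u - v)
      ≤ ∫ u in Ioc 0 T, exp (α * T) * M * exp (α * u) := by
        rw [intervalIntegral.integral_of_le hT]
        refine integral_mono_of_nonneg (Filter.Eventually.of_forall fun u => ?_)
          (Continuous.integrableOn_Ioc (by fun_prop)) (Filter.Eventually.of_forall fun u => ?_)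
        · exact intervalIntegral.integral_nonneg hT fun v _ =>
            mul_nonneg (mul_nonneg (exp_pos _).le (exp_pos _).le) (hρ₀ _)
        · simp only [hinner]
          rw [mul_comm _ (exp (α * u))]
          exact mul_le_mul_of_nonneg_left (integral_exp_mul_comp_sub_le hρ hρ₀ hα.le hT u)
            (exp_pos _).le
    _ ≤ ∫ u in Iic T, exp (α * T) * M * exp (α * u) :=
        setIntegral_mono_set ((integrableOn_exp_mul_Iic hα T).const_mul _)
          (Filter.Eventually.of_forall fun u =>
            mul_nonneg (mul_nonneg (exp_pos _).le hM) (exp_pos _).le)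
          Ioc_subset_Iic_self.eventuallyLE
    _ = M / α * exp (2 * α * T) := by
        rw [integral_const_mul, integral_exp_mul_Iic hα, two_mul, add_mul, exp_add]
        ring

end ExpWeighted

theorem stmt17 (H α : ℝ) (hH : H ∈ Set.Ioo (1/2 : ℝ) 1) (hα : 0 < α) :
    ∃ C : ℝ, 0 < C ∧ ∀ T : ℝ, 0 < T →
      (∫ u in (0:ℝ)..T, ∫ v in (0:ℝ)..T,
          Real.exp (α * u) * Real.exp (α * v) * rker H u v)
        ≤ C * Real.exp (2 * α * T) := by
  obtain ⟨ρ, hρ, hρ₀, hrker⟩ := exists_integrable_rker_eq_comp_sub hH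
  have hM : 0 ≤ (∫ s, ρ s) / α := div_nonneg (integral_nonneg hρ₀) hα.le
  refine ⟨(∫ s, ρ s) / α + 1, by linarith, fun T hT => ?_⟩
  simp only [hrker]
  calc _ ≤ (∫ s, ρ s) / α * exp (2 * α * T) :=
        integral_integral_exp_mul_exp_mul_comp_sub_le hρ hρ₀ hα hT.le
    _ ≤ ((∫ s, ρ s) / α + 1) * exp (2 * α * T) := by gcongr; linarith
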